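/- arXiv:math-ph/9912020 — 3 statements merged into one kernel-verified Lean document; each statement's English description precedes it below -/
import Mathlib

section
/- For every integer m ≥ 0, the ratio x ↦ V_{m+1}(x)/V_m(x) is increasing on (0, ∞). -/
open MeasureTheory Real Set

/-- The one-dimensional regularized Coulomb potential `V_m(x)` for integer `m ≥ 0`. -/
noncomputable def V (m : ℕ) (x : ℝ) : ℝ :=
  (1 / (Nat.factorial m : ℝ)) *
    ∫ u in Set.Ioi (0:ℝ), u ^ m * Real.exp (-u) / Real.sqrt (x ^ 2 + u)

/-! The ratio `V_{m+1}(x) / V_m(x)` is, up to the factor `1 / (m + 1)`, the mean of `u` under the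
weight `w_x(u) = u ^ m e^{-u} / √(x² + u)`. For `x² ≤ y²` the weights at `y` and `x` have the ratio
`√((x² + u) / (y² + u))`, which increases with `u`, so passing from `x` to `y` moves mass towards
larger `u` and the mean grows: integrating the pointwise sign condition
`(u - v) (w_x(u) w_y(v) - w_x(v) w_y(u)) ≤ 0` over the product measure gives
`(∫ u w_x) (∫ w_y) ≤ (∫ w_x) (∫ u w_y)`. -/

section Chebyshev

variable {α : Type*} [MeasurableSpace α] {μ : Measure α} [SFinite μ]

theorem integral_mul_mul_integral_le_of_ae_cross_nonpos {f g h : α → ℝ}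
    (hf : Integrable f μ) (hg : Integrable g μ)
    (hhf : Integrable (fun a ↦ h a * f a) μ) (hhg : Integrable (fun a ↦ h a * g a) μ)
    (hcross : ∀ᵐ p ∂μ.prod μ, (h p.1 - h p.2) * (f p.1 * g p.2 - f p.2 * g p.1) ≤ 0) :
    (∫ a, h a * f a ∂μ) * ∫ a, g a ∂μ ≤ (∫ a, f a ∂μ) * ∫ a, h a * g a ∂μ := by
  have hle : ∫ p : α × α, (h p.1 * f p.1 * g p.2 + g p.1 * (h p.2 * f p.2)) ∂μ.prod μ ≤
      ∫ p : α × α, (f p.1 * (h p.2 * g p.2) + h p.1 * g p.1 * f p.2) ∂μ.prod μ := by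
    refine integral_mono_ae ((hhf.mul_prod hg).add (hg.mul_prod hhf))
      ((hf.mul_prod hhg).add (hhg.mul_prod hf)) ?_
    filter_upwards [hcross] with p hp
    linear_combination hp
  rw [integral_add (hhf.mul_prod hg) (hg.mul_prod hhf),
    integral_add (hf.mul_prod hhg) (hhg.mul_prod hf),
    integral_prod_mul (fun a ↦ h a * f a) g, integral_prod_mul g (fun a ↦ h a * f a),
    integral_prod_mul f (fun a ↦ h a * g a), integral_prod_mul (fun a ↦ h a * g a) f] at hle
  linarith

end Chebyshev

noncomputable def coulombIntegrand (m : ℕ) (x u : ℝ) : ℝ := u ^ m * exp (-u) / √(x ^ 2 + u)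

lemma V_eq (m : ℕ) (x : ℝ) :
    V m x = 1 / (m.factorial : ℝ) * ∫ u in Ioi 0, coulombIntegrand m x u := rfl

lemma mul_coulombIntegrand (m : ℕ) (x u : ℝ) :
    u * coulombIntegrand m x u = coulombIntegrand (m + 1) x u := by
  unfold coulombIntegrand
  ring

lemma coulombIntegrand_pos (m : ℕ) (x : ℝ) {u : ℝ} (hu : 0 < u) : 0 < coulombIntegrand m x u := by
  unfold coulombIntegrand
  positivity

lemma integrableOn_coulombIntegrand (m : ℕ) {x : ℝ} (hx : x ≠ 0) :
    IntegrableOn (coulombIntegrand m x) (Ioi 0) := by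
  have hgamma : IntegrableOn (fun u : ℝ ↦ |x|⁻¹ * (exp (-u) * u ^ m)) (Ioi 0) := by
    have := (GammaIntegral_convergent (s := m + 1) (by positivity)).const_mul |x|⁻¹
    simpa [rpow_natCast, IntegrableOn] using this
  refine hgamma.mono' (by unfold coulombIntegrand; fun_prop : Measurable _).aestronglyMeasurable ?_
  filter_upwards [ae_restrict_mem measurableSet_Ioi] with u (hu : 0 < u)
  have habs : |x| ≤ √(x ^ 2 + u) := by
    rw [← sqrt_sq_eq_abs]
    exact sqrt_le_sqrt (by linarith)
  rw [norm_of_nonneg (coulombIntegrand_pos m x hu).le, coulombIntegrand]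
  calc u ^ m * exp (-u) / √(x ^ 2 + u) ≤ u ^ m * exp (-u) / |x| := by
        gcongr
    _ = |x|⁻¹ * (exp (-u) * u ^ m) := by ring

lemma V_pos (m : ℕ) {x : ℝ} (hx : x ≠ 0) : 0 < V m x := by
  rw [V_eq]
  refine mul_pos (by positivity) ?_
  rw [setIntegral_pos_iff_support_of_nonneg_ae
    (ae_restrict_of_forall_mem measurableSet_Ioi fun u hu ↦ (coulombIntegrand_pos m x hu).le)
    (integrableOn_coulombIntegrand m hx)]
  have hsupport : Function.support (coulombIntegrand m x) ∩ Ioi 0 = Ioi 0 :=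
    inter_eq_right.2 fun u hu ↦ (coulombIntegrand_pos m x hu).ne'
  rw [hsupport, volume_Ioi]
  exact ENNReal.zero_lt_top

lemma sub_mul_inv_sqrt_mul_sub_inv_sqrt_mul_nonpos {a b u v : ℝ} (ha : 0 ≤ a) (hab : a ≤ b)
    (hu : 0 < u) (hv : 0 < v) :
    (u - v) * ((√(a + u) * √(b + v))⁻¹ - (√(a + v) * √(b + u))⁻¹) ≤ 0 := by
  wlog hvu : v ≤ u generalizing u v
  · calc _ = (v - u) * ((√(a + v) * √(b + u))⁻¹ - (√(a + u) * √(b + v))⁻¹) := by ring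
      _ ≤ 0 := this hv hu (le_of_not_ge hvu)
  refine mul_nonpos_of_nonneg_of_nonpos (sub_nonneg.2 hvu) (sub_nonpos.2 ?_)
  have hb : 0 ≤ b := ha.trans hab
  refine inv_anti₀ (by positivity) ?_
  rw [← sqrt_mul (by linarith), ← sqrt_mul (by linarith)]
  exact sqrt_le_sqrt (by nlinarith [mul_nonneg (sub_nonneg.2 hvu) (sub_nonneg.2 hab)])

lemma coulombIntegrand_cross_nonpos (m : ℕ) {x y u v : ℝ} (hxy : x ^ 2 ≤ y ^ 2)
    (hu : 0 < u) (hv : 0 < v) :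
    (u - v) * (coulombIntegrand m x u * coulombIntegrand m y v -
      coulombIntegrand m x v * coulombIntegrand m y u) ≤ 0 := by
  have hfactor : coulombIntegrand m x u * coulombIntegrand m y v -
      coulombIntegrand m x v * coulombIntegrand m y u =
      u ^ m * exp (-u) * (v ^ m * exp (-v)) *
        ((√(x ^ 2 + u) * √(y ^ 2 + v))⁻¹ - (√(x ^ 2 + v) * √(y ^ 2 + u))⁻¹) := by
    simp only [coulombIntegrand, div_eq_mul_inv, mul_inv]
    ring
  rw [hfactor, mul_left_comm]
  exact mul_nonpos_of_nonneg_of_nonpos (by positivity)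
    (sub_mul_inv_sqrt_mul_sub_inv_sqrt_mul_nonpos (sq_nonneg x) hxy hu hv)

lemma V_succ_mul_V_le (m : ℕ) {x y : ℝ} (hx : x ≠ 0) (hxy : x ^ 2 ≤ y ^ 2) :
    V (m + 1) x * V m y ≤ V (m + 1) y * V m x := by
  have hy : y ≠ 0 := by
    rintro rfl
    exact hx (by simpa using hxy)
  have hcross : ∀ᵐ p ∂(volume.restrict (Ioi (0 : ℝ))).prod (volume.restrict (Ioi 0)),
      (p.1 - p.2) * (coulombIntegrand m x p.1 * coulombIntegrand m y p.2 -
        coulombIntegrand m x p.2 * coulombIntegrand m y p.1) ≤ 0 := by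
    rw [Measure.prod_restrict]
    filter_upwards [ae_restrict_mem (measurableSet_Ioi.prod measurableSet_Ioi)] with p hp
    exact coulombIntegrand_cross_nonpos m hxy hp.1 hp.2
  have hint := integral_mul_mul_integral_le_of_ae_cross_nonpos (h := fun u ↦ u)
    (integrableOn_coulombIntegrand m hx) (integrableOn_coulombIntegrand m hy)
    (by simp only [mul_coulombIntegrand]; exact integrableOn_coulombIntegrand (m + 1) hx)
    (by simp only [mul_coulombIntegrand]; exact integrableOn_coulombIntegrand (m + 1) hy) hcross
  simp only [mul_coulombIntegrand] at hint
  simp only [V_eq]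
  calc _ = 1 / ((m + 1).factorial : ℝ) * (1 / m.factorial) *
        ((∫ u in Ioi 0, coulombIntegrand (m + 1) x u) * ∫ u in Ioi 0, coulombIntegrand m y u) := by
        ring
    _ ≤ 1 / ((m + 1).factorial : ℝ) * (1 / m.factorial) *
        ((∫ u in Ioi 0, coulombIntegrand m x u) * ∫ u in Ioi 0, coulombIntegrand (m + 1) y u) := by
        gcongr
    _ = _ := by ring

theorem V_ratio_monotone (m : ℕ) :
    MonotoneOn (fun x => V (m + 1) x / V m x) (Set.Ioi 0) := by
  intro x (hx : 0 < x) y (hy : 0 < y) hxy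
  rw [div_le_div_iff₀ (V_pos m hx.ne') (V_pos m hy.ne')]
  exact V_succ_mul_V_le m hx.ne' (pow_le_pow_left₀ hx.le hxy 2)
end

section
/- For every integer m ≥ 0 and all reals x > 0, y > 0, the subadditivity inequality 1/V_m(x + y) ≤ 1/V_m(x) + 1/V_m(y) holds. -/
open MeasureTheory Real Set

/-! Since `x ↦ x V_m(x)` is nondecreasing, `1/V_m(t) = t / (t V_m(t)) ≥ t / (s V_m(s))` for
`0 < t ≤ s`; taking `t = x, y` and `s = x + y` and adding gives subadditivity. The monotonicity
holds pointwise under the integral: `x / √(x² + u) = 1 / √(1 + u / x²)` is nondecreasing in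
`x > 0` for every `u ≥ 0`. -/

lemma one_div_add_le_of_monotoneOn_mul {g : ℝ → ℝ} (hg : ∀ x, 0 < x → 0 < g x)
    (hmono : MonotoneOn (fun x => x * g x) (Ioi 0)) {x y : ℝ} (hx : 0 < x) (hy : 0 < y) :
    1 / g (x + y) ≤ 1 / g x + 1 / g y := by
  have hxy : 0 < x + y := add_pos hx hy
  have hc : 0 < (x + y) * g (x + y) := mul_pos hxy (hg _ hxy)
  have one_div_ge {t : ℝ} (ht : 0 < t) (hle : t ≤ x + y) :
      t / ((x + y) * g (x + y)) ≤ 1 / g t := by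
    rw [div_le_div_iff₀ hc (hg t ht), one_mul]
    exact hmono ht hxy hle
  calc 1 / g (x + y) = x / ((x + y) * g (x + y)) + y / ((x + y) * g (x + y)) := by
        field_simp [(hg _ hxy).ne']
    _ ≤ 1 / g x + 1 / g y :=
        add_le_add (one_div_ge hx (by linarith)) (one_div_ge hy (by linarith))

lemma monotoneOn_div_sqrt_sq_add {u : ℝ} (hu : 0 ≤ u) :
    MonotoneOn (fun a : ℝ => a / √(a ^ 2 + u)) (Ioi 0) := by
  intro a (ha : 0 < a) b (hb : 0 < b) hab
  dsimp only
  rw [div_le_div_iff₀ (by positivity) (by positivity),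
    ← pow_le_pow_iff_left₀ (by positivity) (by positivity) two_ne_zero, mul_pow, mul_pow,
    sq_sqrt (by positivity), sq_sqrt (by positivity)]
  nlinarith [mul_le_mul_of_nonneg_right (pow_le_pow_left₀ ha.le hab 2) hu]

lemma integrableOn_pow_mul_exp_neg_div_sqrt (m : ℕ) {x : ℝ} (hx : x ≠ 0) :
    IntegrableOn (fun u : ℝ => u ^ m * exp (-u) / √(x ^ 2 + u)) (Ioi 0) := by
  have hΓ : IntegrableOn (fun u : ℝ => exp (-u) * u ^ ((m + 1 : ℝ) - 1)) (Ioi 0) :=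
    GammaIntegral_convergent (by positivity)
  simp only [add_sub_cancel_right, rpow_natCast] at hΓ
  refine Integrable.mono' (hΓ.const_mul |x|⁻¹)
    (by fun_prop : Measurable _).aestronglyMeasurable ?_
  filter_upwards [self_mem_ae_restrict measurableSet_Ioi] with u (hu : 0 < u)
  have hsqrt : |x| ≤ √(x ^ 2 + u) := by
    rw [← sqrt_sq_eq_abs]
    exact sqrt_le_sqrt (by linarith)
  rw [norm_of_nonneg (by positivity), div_eq_mul_inv, mul_comm (exp (-u)), mul_comm |x|⁻¹]
  gcongr

lemma monotoneOn_mul_V (m : ℕ) : MonotoneOn (fun x => x * V m x) (Ioi 0) := by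
  intro a (ha : 0 < a) b (hb : 0 < b) hab
  have hV (x : ℝ) : x * V m x =
      1 / (Nat.factorial m : ℝ) * ∫ u in Ioi 0, u ^ m * exp (-u) * (x / √(x ^ 2 + u)) := by
    rw [V, mul_left_comm, ← integral_const_mul]
    congr 2 with u
    ring
  have hint {x : ℝ} (hx : 0 < x) :
      IntegrableOn (fun u : ℝ => u ^ m * exp (-u) * (x / √(x ^ 2 + u))) (Ioi 0) :=
    IntegrableOn.congr_fun ((integrableOn_pow_mul_exp_neg_div_sqrt m hx.ne').const_mul x)
      (fun u _ => by ring) measurableSet_Ioi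
  dsimp only
  rw [hV, hV]
  gcongr 1 / _ * ?_
  refine setIntegral_mono_on (hint ha) (hint hb) measurableSet_Ioi fun u (hu : 0 < u) => ?_
  exact mul_le_mul_of_nonneg_left (monotoneOn_div_sqrt_sq_add hu.le ha hb hab) (by positivity)

theorem inv_V_subadditive (m : ℕ) (x y : ℝ) (hx : 0 < x) (hy : 0 < y) :
    1 / V m (x + y) ≤ 1 / V m x + 1 / V m y :=
  one_div_add_le_of_monotoneOn_mul (fun _ ht => V_pos m ht.ne') (monotoneOn_mul_V m) hx hy
end

section
/- For every positive integer N, the averaged potential V_av^N(x) = (1/N) Σ_{m=0}^{N−1} V_m(x) satisfies V_av^N(x) = 2 V_N(x) − (2x²/N) [ 1/x − V_{N−1}(x) ] for all x > 0; moreover V_av^N is convex on (0, ∞) and lim_{x→0⁺} (d/dx) V_av^N(x) = −2/N (so V_av^N has a cusp at x = 0). -/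
open MeasureTheory Real Set Filter Topology Finset

/-- The averaged potential of the Slater model,
`V_av^N(x) = (1/N) ∑_{m=0}^{N-1} V_m(x)`. -/
noncomputable def Vav (N : ℕ) (x : ℝ) : ℝ :=
  (1 / (N : ℝ)) * ∑ m ∈ Finset.range N, V m x

/-!
Let `W k x = ∫₀^∞ uᵏ e⁻ᵘ √(x² + u) du`. The Poisson tail `e⁻ᵘ ∑_{m ≤ k} uᵐ/m!` has
`u`-derivative `-uᵏ e⁻ᵘ/k!`, so differentiating `-2 e⁻ᵘ (∑_{m ≤ k} uᵐ/m!) √(x² + u)` in `u`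
and integrating over `(0, ∞)` gives `∑_{m ≤ k} V m x = 2 W k x / k! - 2x`: the averaged
potential `Vav (k+1)` is an affine function of `W k`. Writing `√(x² + u) = (u + x²)/√(x² + u)`
expresses `W k` through `V (k+1)` and `V k`, which is the identity. Since
`x ↦ √(x² + u) = |x + i√u|` is convex, so is `W k`; its derivative `∫ uᵏ e⁻ᵘ x/√(x² + u) du`
is continuous and vanishes at `0`, which leaves only the linear part `-2x/(k+1)` in the
one-sided limit of the derivative.
-/

open scoped Nat

lemma integrableOn_pow_mul_exp_neg (k : ℕ) :
    IntegrableOn (fun u : ℝ => u ^ k * exp (-u)) (Ioi 0) := by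
  refine (GammaIntegral_convergent (s := k + 1) (by positivity)).congr_fun
    (fun u _ => ?_) measurableSet_Ioi
  simp [mul_comm]

lemma integrableOn_pow_mul_exp_neg_mul (k : ℕ) {g : ℝ → ℝ} (hg : ContinuousOn g (Ioi 0))
    (a b : ℝ) (hbound : ∀ u ∈ Ioi (0 : ℝ), ‖g u‖ ≤ a + b * u) :
    IntegrableOn (fun u => u ^ k * exp (-u) * g u) (Ioi 0) := by
  refine Integrable.mono' (((integrableOn_pow_mul_exp_neg k).const_mul a).add
    ((integrableOn_pow_mul_exp_neg (k + 1)).const_mul b)) ?_ ?_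
  · exact ((by fun_prop : Continuous fun u : ℝ => u ^ k * exp (-u)).continuousOn.mul
      hg).aestronglyMeasurable measurableSet_Ioi
  · refine (ae_restrict_iff' measurableSet_Ioi).2 (Eventually.of_forall fun u hu => ?_)
    have hw : 0 ≤ u ^ k * exp (-u) := by have := hu.out; positivity
    rw [norm_mul, Real.norm_of_nonneg hw]
    calc _ ≤ u ^ k * exp (-u) * (a + b * u) := mul_le_mul_of_nonneg_left (hbound u hu) hw
      _ = a * (u ^ k * exp (-u)) + b * (u ^ (k + 1) * exp (-u)) := by ring

lemma integrableOn_V_integrand (m : ℕ) {x : ℝ} (hx : 0 < x) :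
    IntegrableOn (fun u => u ^ m * exp (-u) / √(x ^ 2 + u)) (Ioi 0) := by
  simp_rw [div_eq_mul_inv]
  refine integrableOn_pow_mul_exp_neg_mul m ?_ x⁻¹ 0 fun u hu => ?_
  · exact (by fun_prop : Continuous fun u : ℝ => √(x ^ 2 + u)).continuousOn.inv₀
      fun u hu => (sqrt_pos.2 (by have := hu.out; positivity)).ne'
  · rw [norm_inv, Real.norm_of_nonneg (sqrt_nonneg _), zero_mul, add_zero]
    exact inv_anti₀ hx (le_sqrt_of_sq_le (by linarith [hu.out]))

noncomputable def W (k : ℕ) (x : ℝ) : ℝ :=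
  ∫ u in Ioi (0 : ℝ), u ^ k * exp (-u) * √(x ^ 2 + u)

lemma integrableOn_W_integrand (k : ℕ) (x : ℝ) :
    IntegrableOn (fun u => u ^ k * exp (-u) * √(x ^ 2 + u)) (Ioi 0) := by
  refine integrableOn_pow_mul_exp_neg_mul k (by fun_prop : Continuous _).continuousOn
    (|x| + 1) 1 fun u hu => ?_
  have := hu.out
  rw [Real.norm_of_nonneg (sqrt_nonneg _), sqrt_le_left (by positivity)]
  nlinarith [sq_abs x, abs_nonneg x]

lemma hasDerivAt_exp_neg_mul_sum_pow_div_factorial (k : ℕ) (u : ℝ) :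
    HasDerivAt (fun u => exp (-u) * ∑ m ∈ range (k + 1), u ^ m / m !)
      (-(u ^ k * exp (-u) / k !)) u := by
  induction k with
  | zero => simpa using (hasDerivAt_neg u).exp
  | succ n ih =>
    have hterm := (hasDerivAt_neg u).exp.fun_mul
      ((hasDerivAt_pow (n + 1) u).div_const ((n + 1)! : ℝ))
    have hsplit : (fun v => exp (-v) * ∑ m ∈ range (n + 2), v ^ m / m !) = fun v =>
        exp (-v) * ∑ m ∈ range (n + 1), v ^ m / m ! + exp (-v) * (v ^ (n + 1) / (n + 1)!) := by
      funext v
      rw [sum_range_succ, mul_add]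
    rw [hsplit]
    refine (ih.add hterm).congr_deriv ?_
    rw [Nat.add_sub_cancel, Nat.factorial_succ]
    push_cast
    field_simp
    ring

lemma sum_range_V_eq_W (k : ℕ) {x : ℝ} (hx : 0 < x) :
    ∑ m ∈ range (k + 1), V m x = 2 / k ! * W k x - 2 * x := by
  set F : ℝ → ℝ := fun u =>
    -2 * (exp (-u) * ∑ m ∈ range (k + 1), u ^ m / m !) * √(x ^ 2 + u)
  set F' : ℝ → ℝ := fun u => 2 / k ! * (u ^ k * exp (-u) * √(x ^ 2 + u))
      - ∑ m ∈ range (k + 1), 1 / (m ! : ℝ) * (u ^ m * exp (-u) / √(x ^ 2 + u))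
  have hF' : ∀ u ∈ Ici (0 : ℝ), HasDerivAt F (F' u) u := by
    intro u hu
    have hpos : 0 < x ^ 2 + u := by have := hu.out; positivity
    have hsqrt := ((hasDerivAt_id' u).const_add (x ^ 2)).sqrt hpos.ne'
    refine (((hasDerivAt_exp_neg_mul_sum_pow_div_factorial k u).const_mul (-2)).fun_mul
      hsqrt).congr_deriv ?_
    have hs : √(x ^ 2 + u) ≠ 0 := (sqrt_pos.2 hpos).ne'
    have hsum : ∑ m ∈ range (k + 1), 1 / (m ! : ℝ) * (u ^ m * exp (-u) / √(x ^ 2 + u)) =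
        exp (-u) * (∑ m ∈ range (k + 1), u ^ m / m !) / √(x ^ 2 + u) := by
      rw [mul_sum, sum_div]
      exact sum_congr rfl fun m _ => by ring
    simp only [F', hsum]
    field_simp
    ring
  have hF'int : IntegrableOn F' (Ioi 0) :=
    ((integrableOn_W_integrand k x).const_mul _).sub
      (integrable_finsetSum _ fun m _ => (integrableOn_V_integrand m hx).const_mul _)
  have hFint : IntegrableOn F (Ioi 0) := by
    refine IntegrableOn.congr_fun ((integrable_finsetSum (range (k + 1)) fun m _ =>
      (integrableOn_W_integrand m x).const_mul (1 / (m ! : ℝ))).const_mul (-2))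
      (fun u _ => ?_) measurableSet_Ioi
    simp only [F, mul_sum, sum_mul]
    exact sum_congr rfl fun m _ => by ring
  have hFTC := integral_Ioi_of_hasDerivAt_of_tendsto' hF' hF'int
    (tendsto_zero_of_hasDerivAt_of_integrableOn_Ioi (fun u hu => hF' u (Ioi_subset_Ici_self hu))
      hF'int hFint)
  have hF0 : F 0 = -2 * x := by
    simp [F, sum_range_succ', sqrt_sq hx.le]
  rw [hF0, integral_sub ((integrableOn_W_integrand k x).const_mul _)
    (integrable_finsetSum _ fun m _ => (integrableOn_V_integrand m hx).const_mul _),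
    integral_const_mul,
    integral_finsetSum _ fun m _ => (integrableOn_V_integrand m hx).const_mul _] at hFTC
  simp only [integral_const_mul] at hFTC
  unfold V W
  linarith

lemma W_eq_V_add (k : ℕ) {x : ℝ} (hx : 0 < x) :
    W k x = (k + 1)! * V (k + 1) x + x ^ 2 * (k ! * V k x) := by
  have hsplit : ∀ u ∈ Ioi (0 : ℝ), u ^ k * exp (-u) * √(x ^ 2 + u) =
      u ^ (k + 1) * exp (-u) / √(x ^ 2 + u) + x ^ 2 * (u ^ k * exp (-u) / √(x ^ 2 + u)) := by
    intro u hu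
    have hpos : 0 < x ^ 2 + u := by have := hu.out; positivity
    have hs : √(x ^ 2 + u) ≠ 0 := (sqrt_pos.2 hpos).ne'
    field_simp
    rw [sq_sqrt hpos.le]
    ring
  simp only [W, V, setIntegral_congr_fun measurableSet_Ioi hsplit,
    integral_add (integrableOn_V_integrand (k + 1) hx)
      ((integrableOn_V_integrand k hx).const_mul _), integral_const_mul]
  field_simp

lemma Vav_succ_eq_W (k : ℕ) {x : ℝ} (hx : 0 < x) :
    Vav (k + 1) x = 2 / (k + 1)! * W k x - 2 * x / (k + 1) := by
  rw [Vav, sum_range_V_eq_W k hx, Nat.factorial_succ]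
  push_cast
  field_simp

lemma Vav_eq_two_mul_V_sub {N : ℕ} (hN : 0 < N) {x : ℝ} (hx : 0 < x) :
    Vav N x = 2 * V N x - (2 * x ^ 2 / N) * (1 / x - V (N - 1) x) := by
  obtain ⟨k, rfl⟩ := Nat.exists_eq_add_one_of_ne_zero hN.ne'
  rw [Vav_succ_eq_W k hx, W_eq_V_add k hx, Nat.add_sub_cancel, Nat.factorial_succ]
  push_cast
  field_simp
  ring

lemma convexOn_integral {α E : Type*} [MeasurableSpace α] {μ : Measure α} [AddCommGroup E]
    [Module ℝ E] {s : Set E} {F : E → α → ℝ} (hs : Convex ℝ s)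
    (hF : ∀ᵐ a ∂μ, ConvexOn ℝ s fun x => F x a) (hint : ∀ x ∈ s, Integrable (F x) μ) :
    ConvexOn ℝ s fun x => ∫ a, F x a ∂μ := by
  refine ⟨hs, fun x hx y hy a b ha hb hab => ?_⟩
  calc ∫ t, F (a • x + b • y) t ∂μ ≤ ∫ t, (a • F x t + b • F y t) ∂μ :=
        integral_mono_ae (hint _ (hs hx hy ha hb hab))
          (((hint x hx).smul a).add ((hint y hy).smul b))
          (hF.mono fun t ht => ht.2 hx hy ha hb hab)
    _ = a • ∫ t, F x t ∂μ + b • ∫ t, F y t ∂μ := by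
        rw [← integral_smul, ← integral_smul]
        exact integral_add ((hint x hx).smul a) ((hint y hy).smul b)

lemma convexOn_sqrt_sq_add {c : ℝ} (hc : 0 ≤ c) :
    ConvexOn ℝ univ fun x : ℝ => √(x ^ 2 + c) := by
  refine (((convexOn_norm convex_univ).translate_right ((√c : ℂ) * Complex.I)).comp_linearMap
    Complex.ofRealCLM.toLinearMap).congr fun x _ => ?_
  simp [add_comm, Complex.norm_add_mul_I, sq_sqrt hc]

lemma convexOn_W (k : ℕ) : ConvexOn ℝ univ (W k) := by
  refine convexOn_integral convex_univ ((ae_restrict_iff' measurableSet_Ioi).2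
    (Eventually.of_forall fun u hu => ?_)) fun x _ => integrableOn_W_integrand k x
  have := hu.out
  exact (convexOn_sqrt_sq_add this.le).smul (c := u ^ k * exp (-u)) (by positivity)

lemma convexOn_Vav {N : ℕ} (hN : 0 < N) : ConvexOn ℝ (Ioi 0) (Vav N) := by
  obtain ⟨k, rfl⟩ := Nat.exists_eq_add_one_of_ne_zero hN.ne'
  have hW := ((convexOn_W k).subset (subset_univ _) (convex_Ioi 0)).smul
    (c := (2 / (k + 1)! : ℝ)) (by positivity)
  refine (hW.sub ((concaveOn_id (convex_Ioi (0 : ℝ))).smul (c := (2 / (k + 1) : ℝ))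
    (by positivity))).congr fun x hx => ?_
  simp only [Pi.sub_apply, smul_eq_mul, id, Vav_succ_eq_W k hx]
  ring

lemma norm_pow_mul_exp_neg_mul_div_sqrt_le (k : ℕ) (x : ℝ) {u : ℝ} (hu : 0 < u) :
    ‖u ^ k * exp (-u) * (x / √(x ^ 2 + u))‖ ≤ u ^ k * exp (-u) := by
  have hpos : 0 < √(x ^ 2 + u) := sqrt_pos.2 (by positivity)
  rw [norm_mul, Real.norm_of_nonneg (by positivity), norm_div, Real.norm_of_nonneg hpos.le,
    Real.norm_eq_abs]
  exact mul_le_of_le_one_right (by positivity)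
    ((div_le_one hpos).2 (abs_le_sqrt (by linarith)))

lemma continuousOn_pow_mul_exp_neg_mul_div_sqrt (k : ℕ) (x : ℝ) :
    ContinuousOn (fun u => u ^ k * exp (-u) * (x / √(x ^ 2 + u))) (Ioi 0) :=
  (by fun_prop : Continuous fun u : ℝ => u ^ k * exp (-u)).continuousOn.mul
    (continuousOn_const.div (by fun_prop) fun u hu =>
      (sqrt_pos.2 (by have := hu.out; positivity)).ne')

lemma hasDerivAt_W (k : ℕ) (x : ℝ) :
    HasDerivAt (W k) (∫ u in Ioi (0 : ℝ), u ^ k * exp (-u) * (x / √(x ^ 2 + u))) x := by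
  refine (hasDerivAt_integral_of_dominated_loc_of_deriv_le
    (F' := fun y u => u ^ k * exp (-u) * (y / √(y ^ 2 + u))) (Metric.ball_mem_nhds x one_pos)
    (Eventually.of_forall fun y => (integrableOn_W_integrand k y).aestronglyMeasurable)
    (integrableOn_W_integrand k x)
    ((continuousOn_pow_mul_exp_neg_mul_div_sqrt k x).aestronglyMeasurable measurableSet_Ioi) ?_
    (integrableOn_pow_mul_exp_neg k) ?_).2
  · exact (ae_restrict_iff' measurableSet_Ioi).2 (Eventually.of_forall fun u hu y _ =>
      norm_pow_mul_exp_neg_mul_div_sqrt_le k y hu)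
  · refine (ae_restrict_iff' measurableSet_Ioi).2 (Eventually.of_forall fun u hu y _ => ?_)
    have hpos : 0 < y ^ 2 + u := by have := hu.out; positivity
    refine ((((hasDerivAt_pow 2 y).add_const u).sqrt hpos.ne').const_mul _).congr_deriv ?_
    have hs : √(y ^ 2 + u) ≠ 0 := (sqrt_pos.2 hpos).ne'
    field_simp
    push_cast
    ring

lemma continuous_deriv_W (k : ℕ) : Continuous (deriv (W k)) := by
  rw [funext fun x => (hasDerivAt_W k x).deriv]
  refine continuous_of_dominated (fun y => ?_) (fun y => (ae_restrict_iff' measurableSet_Ioi).2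
    (Eventually.of_forall fun u hu => norm_pow_mul_exp_neg_mul_div_sqrt_le k y hu))
    (integrableOn_pow_mul_exp_neg k) ((ae_restrict_iff' measurableSet_Ioi).2
      (Eventually.of_forall fun u hu => ?_))
  · exact (continuousOn_pow_mul_exp_neg_mul_div_sqrt k y).aestronglyMeasurable measurableSet_Ioi
  · exact continuous_const.mul (continuous_id.div (by fun_prop) fun y =>
      (sqrt_pos.2 (by have := hu.out; positivity)).ne')

lemma deriv_W_zero (k : ℕ) : deriv (W k) 0 = 0 := by
  simp [(hasDerivAt_W k 0).deriv]

lemma tendsto_deriv_Vav {N : ℕ} (hN : 0 < N) :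
    Tendsto (deriv (Vav N)) (𝓝[>] 0) (𝓝 (-2 / N)) := by
  obtain ⟨k, rfl⟩ := Nat.exists_eq_add_one_of_ne_zero hN.ne'
  have hderiv : ∀ x ∈ Ioi (0 : ℝ),
      deriv (Vav (k + 1)) x = 2 / (k + 1)! * deriv (W k) x - 2 / (k + 1) := by
    intro x hx
    have hloc : Vav (k + 1) =ᶠ[𝓝 x] fun y => 2 / (k + 1)! * W k y - 2 * y / (k + 1) :=
      eventually_of_mem (isOpen_Ioi.mem_nhds hx) fun y hy => Vav_succ_eq_W k hy
    rw [hloc.deriv_eq, (((hasDerivAt_W k x).const_mul _).fun_sub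
      (((hasDerivAt_id' x).const_mul 2).div_const _)).deriv, (hasDerivAt_W k x).deriv]
    ring
  have hlim : Tendsto (fun x => 2 / (k + 1)! * deriv (W k) x - 2 / (k + 1)) (𝓝[>] 0)
      (𝓝 (2 / (k + 1)! * deriv (W k) 0 - 2 / (k + 1))) :=
    (((continuous_deriv_W k).tendsto 0).const_mul _ |>.sub_const _).mono_left nhdsWithin_le_nhds
  rw [deriv_W_zero] at hlim
  convert hlim.congr' (eventually_nhdsWithin_of_forall fun x hx => (hderiv x hx).symm) using 2
  push_cast
  ring

theorem Vav_properties (N : ℕ) (hN : 0 < N) :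
    (∀ x : ℝ, 0 < x →
      Vav N x = 2 * V N x - (2 * x ^ 2 / (N : ℝ)) * (1 / x - V (N - 1) x)) ∧
    ConvexOn ℝ (Set.Ioi 0) (Vav N) ∧
    Filter.Tendsto (fun x => deriv (Vav N) x) (nhdsWithin 0 (Set.Ioi 0))
      (nhds (-2 / (N : ℝ))) :=
  ⟨fun _ hx => Vav_eq_two_mul_V_sub hN hx, convexOn_Vav hN, tendsto_deriv_Vav hN⟩
end
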